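/- Let (V, B_d, B_r) be an interconnection and set B̄_r = B_r \ B_d. Then (V, B_d, B_r) has the strong structural synchronization property if and only if (V, B_d, B̄_r) does. Equivalently, with incidence matrices G_d = [A B], G_r = [Ḡ_r B] (where B collects columns of shared edges): there is a nonzero x with G_dᵀ G_r x = 0 and sgn(G_rᵀ G_r x) = sgn(x) if and only if there is a nonzero x₁ with G_dᵀ Ḡ_r x₁ = 0 and sgn(Ḡ_rᵀ Ḡ_r x₁) = sgn(x₁). -/

import Mathlib

open Matrix Polynomial

/-- `G` is the incidence matrix of a graph: every column is `e_k - e_ℓ`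
for some pair of distinct vertices `k, ℓ`. -/
def IsIncidence {q : ℕ} {ι : Type} (G : Matrix (Fin q) ι ℝ) : Prop :=
  ∀ j : ι, ∃ k ℓ : Fin q, k ≠ ℓ ∧
    ∀ i : Fin q, G i j = (if i = k then 1 else 0) - (if i = ℓ then 1 else 0)

/-- The complex matrix `D + iR` built from two real matrices. -/
noncomputable def cM {q : ℕ} (D R : Matrix (Fin q) (Fin q) ℝ) :
    Matrix (Fin q) (Fin q) ℂ :=
  D.map (fun a => (a : ℂ)) + Complex.I • (R.map (fun a => (a : ℂ)))

/-- `Re λ₂(M) > 0`: at most one eigenvalue (with multiplicity), ordered by real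
part, has nonpositive real part. -/
noncomputable def reLam2Pos {q : ℕ} (M : Matrix (Fin q) (Fin q) ℂ) : Prop :=
  (M.charpoly.roots.filter (fun μ : ℂ => μ.re ≤ 0)).card ≤ 1

/-- The weighted Laplacian `G Λ Gᵀ`. -/
def lapOf {q : ℕ} {ι : Type} [Fintype ι] [DecidableEq ι]
    (G : Matrix (Fin q) ι ℝ) (w : ι → ℝ) : Matrix (Fin q) (Fin q) ℝ :=
  G * diagonal w * Gᵀ

/-- Strong structural synchronization: `Re λ₂(D + iR) > 0` for all admissible
Laplacians `D ∈ lap(V,B_d)`, `R ∈ lap(V,B_r)`. -/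
noncomputable def SSS {q : ℕ} {ιd ιr : Type} [Fintype ιd] [DecidableEq ιd]
    [Fintype ιr] [DecidableEq ιr]
    (Gd : Matrix (Fin q) ιd ℝ) (Gr : Matrix (Fin q) ιr ℝ) : Prop :=
  ∀ (wd : ιd → ℝ) (wr : ιr → ℝ), (∀ i, 0 < wd i) → (∀ i, 0 < wr i) →
    reLam2Pos (cM (lapOf Gd wd) (lapOf Gr wr))

lemma charpoly_sub_smul_one {q : ℕ} (N : Matrix (Fin q) (Fin q) ℂ) (μ : ℂ) :
    (N - μ • 1).charpoly = N.charpoly.comp (X + C μ) := by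
  have h : (N - μ • 1).charmatrix = (charmatrix N).map (eval₂RingHom C (X + C μ)) := by
    ext i j
    by_cases hij : i = j
    · subst hij
      simp [charmatrix_apply_eq, Matrix.sub_apply, Matrix.smul_apply, Matrix.one_apply_eq,
        smul_eq_mul, mul_one, map_sub, eval₂_X, eval₂_C, C_sub]
      ring
    · simp [charmatrix_apply_ne _ _ _ hij, Matrix.sub_apply, Matrix.smul_apply,
        Matrix.one_apply_ne hij, smul_eq_mul, mul_zero, sub_zero]
  rw [Matrix.charpoly, h,
    show N.charmatrix.map ⇑(eval₂RingHom C (X + C μ)) =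
      (eval₂RingHom C (X + C μ)).mapMatrix N.charmatrix from rfl,
    ← RingHom.map_det, Matrix.charpoly]
  rfl

lemma charpoly_toLin' {q : ℕ} (T : Matrix (Fin q) (Fin q) ℂ) :
    (Matrix.toLin' T).charpoly = T.charpoly := by
  rw [← LinearMap.charpoly_toMatrix (Matrix.toLin' T) (Pi.basisFun ℂ (Fin q)),
    LinearMap.toMatrix_eq_toMatrix', LinearMap.toMatrix'_toLin']

lemma maxGen_eq_ker {q : ℕ} (φ : Module.End ℂ (Fin q → ℂ))
    (h : ∀ v, φ (φ v) = 0 → φ v = 0) :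
    φ.maxGenEigenspace 0 = LinearMap.ker φ := by
  ext x
  simp only [Module.End.mem_maxGenEigenspace, zero_smul, sub_zero, LinearMap.mem_ker]
  constructor
  · rintro ⟨n, hn⟩
    induction n generalizing x with
    | zero => simp only [pow_zero, Module.End.one_apply] at hn; simp [hn]
    | succ n ih =>
      have : (φ ^ n) (φ x) = 0 := by
        rw [← Module.End.mul_apply, ← pow_succ]; exact hn
      exact h x (ih _ this)
  · intro hx; exact ⟨1, by simpa using hx⟩

lemma rootMult_eq {q : ℕ} (N : Matrix (Fin q) (Fin q) ℂ) (μ : ℂ) :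
    N.charpoly.rootMultiplicity μ =
      Module.finrank ℂ (Module.End.maxGenEigenspace (Matrix.toLin' (N - μ • 1)) 0) := by
  rw [Polynomial.rootMultiplicity_eq_natTrailingDegree, ← charpoly_sub_smul_one,
    ← charpoly_toLin', LinearMap.finrank_maxGenEigenspace_zero_eq]

noncomputable def mc {m n : Type} (T : Matrix m n ℝ) : Matrix m n ℂ :=
  T.map (fun a => (a : ℂ))

lemma mc_mul {m n k : Type} [Fintype n] (P : Matrix m n ℝ) (Q : Matrix n k ℝ) :
    mc (P * Q) = mc P * mc Q :=
  Matrix.map_mul (f := Complex.ofRealHom)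

lemma mc_conjTranspose {m n : Type} (P : Matrix m n ℝ) : (mc P)ᴴ = mc Pᵀ := by
  ext i j
  simp [mc, conjTranspose_apply, Complex.conj_ofReal]

lemma mc_diagonal {ι : Type} [DecidableEq ι] (w : ι → ℝ) :
    mc (diagonal w) = diagonal (fun j => (w j : ℂ)) := by
  simp [mc, Matrix.diagonal_map]

lemma quad_lap {q : ℕ} {ι : Type} [Fintype ι] [DecidableEq ι]
    (G : Matrix (Fin q) ι ℝ) (w : ι → ℝ) (x : Fin q → ℂ) :
    star x ⬝ᵥ (mc (lapOf G w)) *ᵥ x =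
      ((∑ j, w j * Complex.normSq ((mc Gᵀ *ᵥ x) j) : ℝ) : ℂ) := by
  set y := mc Gᵀ *ᵥ x with hy
  have h1 : mc (lapOf G w) *ᵥ x = mc G *ᵥ (diagonal (fun j => (w j : ℂ)) *ᵥ y) := by
    rw [lapOf, mc_mul, mc_mul, mc_diagonal, ← mulVec_mulVec, ← mulVec_mulVec]
  rw [h1, dotProduct_mulVec]
  have h2 : vecMul (star x) (mc G) = star y := by
    rw [hy, ← mc_conjTranspose, star_mulVec, conjTranspose_conjTranspose]
  rw [h2]
  have h3 : ∀ j, (star y) j * (diagonal (fun j => (w j : ℂ)) *ᵥ y) j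
      = ((w j * Complex.normSq (y j) : ℝ) : ℂ) := by
    intro j
    rw [mulVec_diagonal]
    simp only [Pi.star_apply, RCLike.star_def]
    rw [mul_left_comm, ← Complex.normSq_eq_conj_mul_self, Complex.ofReal_mul]
  rw [dotProduct, Complex.ofReal_sum]
  exact Finset.sum_congr rfl (fun j _ => by rw [h3 j, Complex.ofReal_mul])

section Spectral
variable {q : ℕ} (D R S : Matrix (Fin q) (Fin q) ℂ)

lemma star_dot_self (x : Fin q → ℂ) :
    star x ⬝ᵥ x = ((∑ j, Complex.normSq (x j) : ℝ) : ℂ) := by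
  rw [dotProduct, Complex.ofReal_sum]
  refine Finset.sum_congr rfl (fun j _ => ?_)
  simp only [Pi.star_apply, RCLike.star_def]
  rw [← Complex.normSq_eq_conj_mul_self]

lemma star_dot_self_eq_zero {x : Fin q → ℂ} (h : star x ⬝ᵥ x = 0) : x = 0 := by
  rw [star_dot_self] at h
  have h2 : (∑ j, Complex.normSq (x j) : ℝ) = 0 := by exact_mod_cast h
  funext j
  have := (Finset.sum_eq_zero_iff_of_nonneg
    (fun i _ => Complex.normSq_nonneg (x i))).mp h2 j (Finset.mem_univ j)
  simpa [Complex.normSq_eq_zero] using this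

variable
  (hD : Dᴴ = D) (hR : Rᴴ = R) (hS : Sᴴ = S)
  (quadD : ∀ x : Fin q → ℂ, ∃ r : ℝ, 0 ≤ r ∧ star x ⬝ᵥ D *ᵥ x = (r : ℂ) ∧
      (r = 0 → D *ᵥ x = 0 ∧ S *ᵥ x = 0))
  (quadR : ∀ x : Fin q → ℂ, ∃ s : ℝ, star x ⬝ᵥ R *ᵥ x = (s : ℂ))
  (quadS : ∀ x : Fin q → ℂ, ∃ s : ℝ, star x ⬝ᵥ S *ᵥ x = (s : ℂ))

section Z
variable (Z : Matrix (Fin q) (Fin q) ℂ) (hZ : Zᴴ = Z)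
  (quadZ : ∀ x : Fin q → ℂ, ∃ s : ℝ, star x ⬝ᵥ Z *ᵥ x = (s : ℂ))

include quadD quadZ in
lemma eig_core {μ : ℂ} {x : Fin q → ℂ} (hμ : μ.re ≤ 0)
    (hx : (D + Complex.I • Z) *ᵥ x = μ • x) :
    D *ᵥ x = 0 ∧ S *ᵥ x = 0 ∧ (x ≠ 0 → μ.re = 0) := by
  obtain ⟨r, hr0, hr, hrk⟩ := quadD x
  obtain ⟨s, hs⟩ := quadZ x
  have key : star x ⬝ᵥ ((D + Complex.I • Z) *ᵥ x) = (r : ℂ) + Complex.I * s := by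
    rw [add_mulVec, dotProduct_add, smul_mulVec, dotProduct_smul, hr, hs,
      smul_eq_mul]
  have key2 : star x ⬝ᵥ ((D + Complex.I • Z) *ᵥ x)
      = μ * ((∑ j, Complex.normSq (x j) : ℝ) : ℂ) := by
    rw [hx, dotProduct_smul, smul_eq_mul, star_dot_self]
  have hre : r = μ.re * (∑ j, Complex.normSq (x j) : ℝ) := by
    have := key.symm.trans key2
    have h := congrArg Complex.re this
    simpa using h
  have hn0 : 0 ≤ (∑ j, Complex.normSq (x j) : ℝ) :=
    Finset.sum_nonneg (fun i _ => Complex.normSq_nonneg (x i))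
  have hrz : r = 0 := le_antisymm (by nlinarith) hr0
  obtain ⟨hDx, hSx⟩ := hrk hrz
  refine ⟨hDx, hSx, fun hxne => ?_⟩
  have hnpos : 0 < (∑ j, Complex.normSq (x j) : ℝ) := by
    rcases lt_or_eq_of_le hn0 with h | h
    · exact h
    · exfalso; apply hxne; apply star_dot_self_eq_zero
      rw [star_dot_self, ← h, Complex.ofReal_zero]
  have hmul : μ.re * (∑ j, Complex.normSq (x j) : ℝ) = 0 := by rw [← hre, hrz]
  exact (mul_eq_zero.mp hmul).resolve_right (ne_of_gt hnpos)

include quadD quadZ hD hZ in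
lemma semisimple_core {μ : ℂ} (hμ : μ.re ≤ 0) (v : Fin q → ℂ)
    (hv : ((D + Complex.I • Z) - μ • 1) *ᵥ (((D + Complex.I • Z) - μ • 1) *ᵥ v) = 0) :
    ((D + Complex.I • Z) - μ • 1) *ᵥ v = 0 := by
  set M := D + Complex.I • Z with hM
  set u := (M - μ • 1) *ᵥ v with hu
  have hMu : M *ᵥ u = μ • u := by
    rw [sub_mulVec, smul_mulVec, one_mulVec, sub_eq_zero] at hv
    exact hv
  by_cases hune : u = 0
  · exact hune
  obtain ⟨hDu, hSu, hμ0⟩ := eig_core D S quadD Z quadZ hμ hMu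
  have hre : μ.re = 0 := hμ0 hune
  have hZu : Complex.I • (Z *ᵥ u) = μ • u := by
    have h5 : D *ᵥ u + Complex.I • (Z *ᵥ u) = μ • u := by
      rw [← smul_mulVec, ← add_mulVec]; exact hMu
    rwa [hDu, zero_add] at h5
  have hstar : star μ = -μ := by
    apply Complex.ext <;> simp [hre]
  have hconjM : (M - μ • 1)ᴴ = D + -(Complex.I • Z) + μ • 1 := by
    rw [hM, conjTranspose_sub, conjTranspose_add, conjTranspose_smul,
      conjTranspose_smul, conjTranspose_one, hD, hZ, hstar, Complex.star_def,
      Complex.conj_I, neg_smul, neg_smul, sub_neg_eq_add]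
  have hMH : (M - μ • 1)ᴴ *ᵥ u = 0 := by
    rw [hconjM, add_mulVec, add_mulVec, neg_mulVec, smul_mulVec,
      smul_mulVec, one_mulVec, hDu, hZu]
    funext i
    simp
  have hz : star u ⬝ᵥ ((M - μ • 1) *ᵥ v) = 0 := by
    have h0 : star ((M - μ • 1)ᴴ *ᵥ u) = star u ᵥ* (M - μ • 1) := by
      rw [star_mulVec, conjTranspose_conjTranspose]
    rw [dotProduct_mulVec, ← h0, hMH, star_zero, zero_dotProduct]
  rw [← hu] at hz
  exact absurd (star_dot_self_eq_zero hz) hune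

include hD hZ quadD quadZ in
lemma mult_eq_finrank_ker {μ : ℂ} (hμ : μ.re ≤ 0) :
    ((D + Complex.I • Z).charpoly).rootMultiplicity μ =
      Module.finrank ℂ (LinearMap.ker (Matrix.toLin' ((D + Complex.I • Z) - μ • 1))) := by
  rw [rootMult_eq, maxGen_eq_ker]
  intro v hv
  simp only [Matrix.toLin'_apply] at hv ⊢
  exact semisimple_core D S hD quadD Z hZ quadZ hμ v hv

end Z

include hD hR hS quadD quadR quadS in
lemma filter_roots_eq :
    Multiset.filter (fun μ : ℂ => μ.re ≤ 0) ((D + Complex.I • (R + S)).charpoly.roots) =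
    Multiset.filter (fun μ : ℂ => μ.re ≤ 0) ((D + Complex.I • R).charpoly.roots) := by
  have hRS : (R + S)ᴴ = R + S := by rw [conjTranspose_add, hR, hS]
  have quadRS : ∀ x : Fin q → ℂ, ∃ s : ℝ, star x ⬝ᵥ (R + S) *ᵥ x = (s : ℂ) := by
    intro x
    obtain ⟨s1, h1⟩ := quadR x; obtain ⟨s2, h2⟩ := quadS x
    exact ⟨s1 + s2, by rw [add_mulVec, dotProduct_add, h1, h2]; push_cast; ring⟩
  have expand : ∀ x : Fin q → ℂ, (D + Complex.I • (R + S)) *ᵥ x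
      = (D + Complex.I • R) *ᵥ x + Complex.I • (S *ᵥ x) := by
    intro x
    rw [add_mulVec, add_mulVec, smul_mulVec, smul_mulVec, add_mulVec,
      smul_add, add_assoc]
  ext μ
  rw [Multiset.count_filter, Multiset.count_filter]
  by_cases hμ : μ.re ≤ 0
  · rw [if_pos hμ, if_pos hμ, count_roots, count_roots,
      mult_eq_finrank_ker D S hD quadD _ hRS quadRS hμ,
      mult_eq_finrank_ker D S hD quadD _ hR quadR hμ]
    have hker : LinearMap.ker (Matrix.toLin' ((D + Complex.I • (R + S)) - μ • 1))
        = LinearMap.ker (Matrix.toLin' ((D + Complex.I • R) - μ • 1)) := by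
      ext x
      simp only [LinearMap.mem_ker, Matrix.toLin'_apply]
      rw [sub_mulVec, smul_mulVec, one_mulVec, sub_eq_zero,
        sub_mulVec, smul_mulVec, one_mulVec, sub_eq_zero]
      constructor
      · intro hx
        obtain ⟨hDx, hSx, -⟩ := eig_core D S quadD _ quadRS hμ hx
        rw [expand, hSx, smul_zero, add_zero] at hx
        exact hx
      · intro hx
        obtain ⟨hDx, hSx, -⟩ := eig_core D S quadD _ quadR hμ hx
        rw [expand, hSx, smul_zero, add_zero]
        exact hx
    rw [hker]
  · rw [if_neg hμ, if_neg hμ]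

end Spectral
section Concrete

variable {q pa pb pc : ℕ}

lemma mc_lapOf_conjTranspose {ι : Type} [Fintype ι] [DecidableEq ι]
    (G : Matrix (Fin q) ι ℝ) (w : ι → ℝ) :
    (mc (lapOf G w))ᴴ = mc (lapOf G w) := by
  rw [mc_conjTranspose]
  congr 1
  rw [lapOf, transpose_mul, transpose_mul, transpose_transpose, diagonal_transpose,
    Matrix.mul_assoc]

lemma lap_ker {ι : Type} [Fintype ι] [DecidableEq ι]
    (G : Matrix (Fin q) ι ℝ) (w : ι → ℝ) {x : Fin q → ℂ} (h : mc Gᵀ *ᵥ x = 0) :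
    mc (lapOf G w) *ᵥ x = 0 := by
  rw [lapOf, mc_mul, mc_mul, mc_diagonal, ← mulVec_mulVec, ← mulVec_mulVec, h,
    mulVec_zero, mulVec_zero]

lemma quad_exists {ι : Type} [Fintype ι] [DecidableEq ι]
    (G : Matrix (Fin q) ι ℝ) (w : ι → ℝ) (x : Fin q → ℂ) :
    ∃ s : ℝ, star x ⬝ᵥ mc (lapOf G w) *ᵥ x = (s : ℂ) :=
  ⟨_, quad_lap G w x⟩

lemma quad_pos {ι : Type} [Fintype ι] [DecidableEq ι]
    (G : Matrix (Fin q) ι ℝ) (w : ι → ℝ) (hw : ∀ i, 0 < w i) (x : Fin q → ℂ) :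
    ∃ r : ℝ, 0 ≤ r ∧ star x ⬝ᵥ mc (lapOf G w) *ᵥ x = (r : ℂ) ∧
      (r = 0 → mc Gᵀ *ᵥ x = 0) := by
  refine ⟨∑ j, w j * Complex.normSq ((mc Gᵀ *ᵥ x) j), ?_, quad_lap G w x, ?_⟩
  · exact Finset.sum_nonneg fun j _ =>
      mul_nonneg (hw j).le (Complex.normSq_nonneg _)
  · intro h0
    funext j
    have h := (Finset.sum_eq_zero_iff_of_nonneg (fun i _ =>
      mul_nonneg (hw i).le (Complex.normSq_nonneg _))).mp h0 j (Finset.mem_univ j)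
    have := (mul_eq_zero.mp h).resolve_left (ne_of_gt (hw j))
    simpa [Complex.normSq_eq_zero] using this

lemma mc_fromRows {m₁ m₂ n : Type} (P : Matrix m₁ n ℝ) (Q : Matrix m₂ n ℝ) :
    mc (fromRows P Q) = fromRows (mc P) (mc Q) := by
  ext i j
  cases i <;> simp [mc, fromRows_apply_inl, fromRows_apply_inr]

lemma ker_fromColumns_transpose (A : Matrix (Fin q) (Fin pa) ℝ)
    (B : Matrix (Fin q) (Fin pb) ℝ) {x : Fin q → ℂ}
    (h : mc (fromCols A B)ᵀ *ᵥ x = 0) : mc Bᵀ *ᵥ x = 0 := by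
  rw [transpose_fromCols, mc_fromRows, fromRows_mulVec] at h
  funext j
  exact congrFun h (Sum.inr j)

lemma lap_fromColumns (G₁ : Matrix (Fin q) (Fin pc) ℝ) (G₂ : Matrix (Fin q) (Fin pb) ℝ)
    (w₁ : Fin pc → ℝ) (w₂ : Fin pb → ℝ) :
    lapOf (fromCols G₁ G₂) (Sum.elim w₁ w₂) = lapOf G₁ w₁ + lapOf G₂ w₂ := by
  rw [lapOf, lapOf, lapOf, ← fromBlocks_diagonal, transpose_fromCols,
    fromCols_mul_fromBlocks, fromCols_mul_fromRows]
  simp [Matrix.mul_zero, Matrix.zero_mul]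

lemma mc_add {m n : Type} (P Q : Matrix m n ℝ) : mc (P + Q) = mc P + mc Q := by
  ext i j; simp [mc]

end Concrete

section Bridge

variable {q pa pb pc : ℕ}

lemma reLam2Pos_add_iff (A : Matrix (Fin q) (Fin pa) ℝ) (B : Matrix (Fin q) (Fin pb) ℝ)
    (Gbar : Matrix (Fin q) (Fin pc) ℝ) (wd : Fin pa ⊕ Fin pb → ℝ)
    (wc : Fin pc → ℝ) (wb : Fin pb → ℝ) (hwd : ∀ i, 0 < wd i) :
    (reLam2Pos (cM (lapOf (fromCols A B) wd) (lapOf Gbar wc + lapOf B wb)) ↔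
     reLam2Pos (cM (lapOf (fromCols A B) wd) (lapOf Gbar wc))) := by
  have quadD : ∀ x : Fin q → ℂ, ∃ r : ℝ, 0 ≤ r ∧
      star x ⬝ᵥ mc (lapOf (fromCols A B) wd) *ᵥ x = (r : ℂ) ∧
      (r = 0 → mc (lapOf (fromCols A B) wd) *ᵥ x = 0 ∧ mc (lapOf B wb) *ᵥ x = 0) := by
    intro x
    obtain ⟨r, h0, hq, hk⟩ := quad_pos (fromCols A B) wd hwd x
    refine ⟨r, h0, hq, fun hr => ?_⟩
    have hGdT := hk hr
    exact ⟨lap_ker _ _ hGdT, lap_ker _ _ (ker_fromColumns_transpose A B hGdT)⟩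
  have key := filter_roots_eq (mc (lapOf (fromCols A B) wd)) (mc (lapOf Gbar wc))
    (mc (lapOf B wb)) (mc_lapOf_conjTranspose _ _) (mc_lapOf_conjTranspose _ _)
    (mc_lapOf_conjTranspose _ _) quadD (quad_exists _ _) (quad_exists _ _)
  have hcM1 : cM (lapOf (fromCols A B) wd) (lapOf Gbar wc + lapOf B wb)
      = mc (lapOf (fromCols A B) wd)
        + Complex.I • (mc (lapOf Gbar wc) + mc (lapOf B wb)) := by
    rw [cM, ← mc_add]; rfl
  have hcM2 : cM (lapOf (fromCols A B) wd) (lapOf Gbar wc)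
      = mc (lapOf (fromCols A B) wd) + Complex.I • mc (lapOf Gbar wc) := rfl
  rw [reLam2Pos, reLam2Pos, hcM1, hcM2, key]

end Bridge

/-- Removing the shared dissipative edges from the restorative edge set does not
change strong structural synchronization: with `G_d = [A B]`, `G_r = [Ḡ_r B]`
(`B` collecting the columns of the shared edges `B_d ∩ B_r`), the
interconnection `(V,B_d,B_r)` is SSS iff `(V,B_d,B̄_r)` is; equivalently, a
nonzero `x` with `G_dᵀ G_r x = 0` and `sgn(G_rᵀ G_r x) = sgn(x)` exists iff a
nonzero `x₁` with `G_dᵀ Ḡ_r x₁ = 0` and `sgn(Ḡ_rᵀ Ḡ_r x₁) = sgn(x₁)` exists. -/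
theorem stmt19 {q pa pb pc : ℕ}
    (A : Matrix (Fin q) (Fin pa) ℝ) (B : Matrix (Fin q) (Fin pb) ℝ)
    (Gbar : Matrix (Fin q) (Fin pc) ℝ)
    (hA : IsIncidence A) (hB : IsIncidence B) (hGbar : IsIncidence Gbar) :
    letI Gd := fromCols A B
    letI Gr := fromCols Gbar B
    (SSS Gd Gr ↔ SSS Gd Gbar) ∧
    ((∃ x : Fin pc ⊕ Fin pb → ℝ, x ≠ 0 ∧ Gdᵀ.mulVec (Gr.mulVec x) = 0 ∧
        ∀ i, Real.sign ((Grᵀ.mulVec (Gr.mulVec x)) i) = Real.sign (x i)) ↔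
      (∃ x₁ : Fin pc → ℝ, x₁ ≠ 0 ∧ Gdᵀ.mulVec (Gbar.mulVec x₁) = 0 ∧
        ∀ i, Real.sign ((Gbarᵀ.mulVec (Gbar.mulVec x₁)) i) = Real.sign (x₁ i))) := by
  refine ⟨?_, ?_⟩
  · -- SSS iff
    constructor
    · intro h wd wc hwd hwc
      have hpos : ∀ i : Fin pc ⊕ Fin pb, 0 < Sum.elim wc (fun _ => (1 : ℝ)) i := by
        rintro (i | i)
        · exact hwc i
        · exact one_pos
      have h2 := h wd (Sum.elim wc (fun _ => (1 : ℝ))) hwd hpos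
      rw [lap_fromColumns] at h2
      exact (reLam2Pos_add_iff A B Gbar wd wc (fun _ => 1) hwd).mp h2
    · intro h wd wr hwd hwr
      have hwr' : wr = Sum.elim (wr ∘ Sum.inl) (wr ∘ Sum.inr) := by
        funext i; cases i <;> rfl
      rw [hwr', lap_fromColumns]
      exact (reLam2Pos_add_iff A B Gbar wd (wr ∘ Sum.inl) (wr ∘ Sum.inr) hwd).mpr
        (h wd (wr ∘ Sum.inl) hwd (fun i => hwr _))
  · -- existence iff
    constructor
    · rintro ⟨x, hx0, hGd, hsgn⟩
      set x₁ := x ∘ Sum.inl with hx₁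
      set x₂ := x ∘ Sum.inr with hx₂
      have hxe : x = Sum.elim x₁ x₂ := by funext i; cases i <;> rfl
      have hv : fromCols Gbar B *ᵥ x = Gbar *ᵥ x₁ + B *ᵥ x₂ := by
        rw [hxe, fromCols_mulVec_sumElim]
      have hGdrow : (fromCols A B)ᵀ *ᵥ (fromCols Gbar B *ᵥ x)
          = Sum.elim (Aᵀ *ᵥ (fromCols Gbar B *ᵥ x)) (Bᵀ *ᵥ (fromCols Gbar B *ᵥ x)) := by
        rw [transpose_fromCols, fromRows_mulVec]
      have hBv : Bᵀ *ᵥ (fromCols Gbar B *ᵥ x) = 0 := by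
        funext j
        have := congrFun (hGdrow.symm.trans hGd) (Sum.inr j)
        exact this
      have hGrrow : (fromCols Gbar B)ᵀ *ᵥ (fromCols Gbar B *ᵥ x)
          = Sum.elim (Gbarᵀ *ᵥ (fromCols Gbar B *ᵥ x)) (Bᵀ *ᵥ (fromCols Gbar B *ᵥ x)) := by
        rw [transpose_fromCols, fromRows_mulVec]
      have hx2 : x₂ = 0 := by
        funext j
        have hs := hsgn (Sum.inr j)
        rw [show ((fromCols Gbar B)ᵀ.mulVec (fromCols Gbar B *ᵥ x)) (Sum.inr j)
            = (Bᵀ *ᵥ (fromCols Gbar B *ᵥ x)) j from congrFun hGrrow (Sum.inr j)] at hs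
        rw [hBv] at hs
        simp only [Pi.zero_apply, Real.sign_zero] at hs
        have := Real.sign_eq_zero_iff.mp hs.symm
        exact this
      have hveq : fromCols Gbar B *ᵥ x = Gbar *ᵥ x₁ := by
        rw [hv, hx2, mulVec_zero, add_zero]
      refine ⟨x₁, ?_, ?_, ?_⟩
      · intro h1
        apply hx0
        rw [hxe, h1, hx2]
        funext i; cases i <;> rfl
      · rw [← hveq]; exact hGd
      · intro i
        have hs := hsgn (Sum.inl i)
        rw [show ((fromCols Gbar B)ᵀ.mulVec (fromCols Gbar B *ᵥ x)) (Sum.inl i)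
            = (Gbarᵀ *ᵥ (fromCols Gbar B *ᵥ x)) i from congrFun hGrrow (Sum.inl i)] at hs
        rw [hveq] at hs
        exact hs
    · rintro ⟨x₁, hx0, hGd, hsgn⟩
      refine ⟨Sum.elim x₁ 0, ?_, ?_, ?_⟩
      · intro h1
        apply hx0
        funext i
        exact congrFun h1 (Sum.inl i)
      · rw [show fromCols Gbar B *ᵥ Sum.elim x₁ 0 = Gbar *ᵥ x₁ by
          rw [fromCols_mulVec_sumElim, mulVec_zero, add_zero]]
        exact hGd
      · intro i
        have hveq : fromCols Gbar B *ᵥ Sum.elim x₁ 0 = Gbar *ᵥ x₁ := by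
          rw [fromCols_mulVec_sumElim, mulVec_zero, add_zero]
        have hGrrow : (fromCols Gbar B)ᵀ *ᵥ (Gbar *ᵥ x₁)
            = Sum.elim (Gbarᵀ *ᵥ (Gbar *ᵥ x₁)) (Bᵀ *ᵥ (Gbar *ᵥ x₁)) := by
          rw [transpose_fromCols, fromRows_mulVec]
        have hBv : Bᵀ *ᵥ (Gbar *ᵥ x₁) = 0 := by
          funext j
          have h2 : (fromCols A B)ᵀ *ᵥ (Gbar *ᵥ x₁)
              = Sum.elim (Aᵀ *ᵥ (Gbar *ᵥ x₁)) (Bᵀ *ᵥ (Gbar *ᵥ x₁)) := by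
            rw [transpose_fromCols, fromRows_mulVec]
          exact congrFun (h2.symm.trans hGd) (Sum.inr j)
        cases i with
        | inl i =>
          rw [show ((fromCols Gbar B)ᵀ.mulVec (fromCols Gbar B *ᵥ Sum.elim x₁ 0)) (Sum.inl i)
              = (Gbarᵀ *ᵥ (Gbar *ᵥ x₁)) i by rw [hveq]; exact congrFun hGrrow (Sum.inl i)]
          exact hsgn i
        | inr i =>
          rw [show ((fromCols Gbar B)ᵀ.mulVec (fromCols Gbar B *ᵥ Sum.elim x₁ 0)) (Sum.inr i)
              = (Bᵀ *ᵥ (Gbar *ᵥ x₁)) i by rw [hveq]; exact congrFun hGrrow (Sum.inr i)]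
          rw [hBv]
          simp
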